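/- For all a, b, c, d ∈ ℂ, conjugation by D maps the Slodowy slice to itself, with the explicit formula D · C(a,b,c,d) · D⁻¹ = C(−a − 2d, −b, 2a + c + 2d, d). -/

import Mathlib

noncomputable section

/-- The matrix `C(a,b,c,d)` with rows
`(0, −a, −b, 1, 0), (−1, 0, 1, 0, 0), (0, c, −b, 0, 0), (a, 0, d, 0, −c), (b, −d, 0, −1, b)`,
an element of the Slodowy slice `x + ker ad(y)` in `𝔰𝔬(5,ℂ)`. -/
def Cmat (a b c d : ℂ) : Matrix (Fin 5) (Fin 5) ℂ :=
  !![0, -a, -b, 1, 0; -1, 0, 1, 0, 0; 0, c, -b, 0, 0; a, 0, d, 0, -c; b, -d, 0, -1, b]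

/-- The involution `D` generating `C(x,h) ≅ ℤ/2ℤ`. -/
def D5 : Matrix (Fin 5) (Fin 5) ℂ :=
  !![1,0,0,0,2; 0,-1,0,0,0; 2,0,-1,0,2; 0,0,0,-1,0; 0,0,0,0,-1]

theorem D5_mul_self : D5 * D5 = 1 := by
  ext i j
  fin_cases i <;> fin_cases j <;> simp [D5, Matrix.mul_apply, Fin.sum_univ_five]
  norm_num

theorem isUnit_det_D5 : IsUnit D5.det :=
  Matrix.isUnit_det_of_right_inverse D5_mul_self

theorem D5_mul_Cmat (a b c d : ℂ) :
    D5 * Cmat a b c d = Cmat (-a - 2*d) (-b) (2*a + c + 2*d) d * D5 := by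
  ext i j
  fin_cases i <;> fin_cases j <;> simp [D5, Cmat, Matrix.mul_apply, Fin.sum_univ_five] <;> ring

/-- Conjugation by `D` maps the Slodowy slice to itself:
`D · C(a,b,c,d) · D⁻¹ = C(−a − 2d, −b, 2a + c + 2d, d)`. -/
theorem D_conj_Cmat (a b c d : ℂ) :
    D5 * Cmat a b c d * D5⁻¹ = Cmat (-a - 2*d) (-b) (2*a + c + 2*d) d := by
  rw [D5_mul_Cmat, Matrix.mul_nonsing_inv_cancel_right _ _ isUnit_det_D5]
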